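/- Under the permutation null distribution, for all integers 0 ≤ t1 < t2 ≤ n, the variance of U_diff^π(t1,t2) equals 4(t2 − t1)(n − t2 + t1)(n−1)·(r1² − r0²). -/

import Mathlib

open Finset

namespace RING

/-- `U1^π(t1,t2)`: sum of `R (π i) (π j)` over indices (1-based `i,j ∈ {1,…,n}`,
represented by `Fin n` with `i` standing for index `i+1`) with `t1 < i ≤ t2` and
`t1 < j ≤ t2`. -/
noncomputable def U1 (n : ℕ) (R : Fin n → Fin n → ℝ) (π : Equiv.Perm (Fin n))
    (t1 t2 : ℕ) : ℝ :=
  ∑ i : Fin n, ∑ j : Fin n,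
    if t1 ≤ (i : ℕ) ∧ (i : ℕ) < t2 ∧ t1 ≤ (j : ℕ) ∧ (j : ℕ) < t2 then R (π i) (π j) else 0

/-- `U2^π(t1,t2)`: sum of `R (π i) (π j)` over indices with `i ≤ t1` or `i > t2`,
and `j ≤ t1` or `j > t2`. -/
noncomputable def U2 (n : ℕ) (R : Fin n → Fin n → ℝ) (π : Equiv.Perm (Fin n))
    (t1 t2 : ℕ) : ℝ :=
  ∑ i : Fin n, ∑ j : Fin n,
    if ((i : ℕ) < t1 ∨ t2 ≤ (i : ℕ)) ∧ ((j : ℕ) < t1 ∨ t2 ≤ (j : ℕ)) then R (π i) (π j) else 0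

/-- Expectation under the permutation null distribution (uniform over all `n!`
permutations). -/
noncomputable def pexp (n : ℕ) (f : Equiv.Perm (Fin n) → ℝ) : ℝ :=
  (∑ π : Equiv.Perm (Fin n), f π) / (Nat.factorial n)

/-- Variance under the permutation null distribution. -/
noncomputable def pvar (n : ℕ) (f : Equiv.Perm (Fin n) → ℝ) : ℝ :=
  pexp n (fun π => (f π - pexp n f) ^ 2)

/-- Covariance under the permutation null distribution. -/
noncomputable def pcov (n : ℕ) (f g : Equiv.Perm (Fin n) → ℝ) : ℝ :=
  pexp n (fun π => (f π - pexp n f) * (g π - pexp n g))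

/-- `R̄_{i·} = (Σ_j R_{ij})/(n-1)`. -/
noncomputable def Rbar (n : ℕ) (R : Fin n → Fin n → ℝ) (i : Fin n) : ℝ :=
  (∑ j : Fin n, R i j) / ((n : ℝ) - 1)

/-- `r0 = (1/n) Σ_i R̄_{i·}`. -/
noncomputable def r0 (n : ℕ) (R : Fin n → Fin n → ℝ) : ℝ :=
  (∑ i : Fin n, Rbar n R i) / n

/-- `r1² = (1/n) Σ_i R̄_{i·}²`. -/
noncomputable def r1sq (n : ℕ) (R : Fin n → Fin n → ℝ) : ℝ :=
  (∑ i : Fin n, (Rbar n R i) ^ 2) / n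

/-- `r_d² = (1/(n(n-1))) Σ_i Σ_j R_{ij}²`. -/
noncomputable def rdsq (n : ℕ) (R : Fin n → Fin n → ℝ) : ℝ :=
  (∑ i : Fin n, ∑ j : Fin n, (R i j) ^ 2) / ((n : ℝ) * ((n : ℝ) - 1))

/-- `A(t) = 2t(t-1)(n-t)(n-t-1)/((n-2)(n-3))`. -/
noncomputable def A (n t : ℕ) : ℝ :=
  2 * (t : ℝ) * ((t : ℝ) - 1) * ((n : ℝ) - t) * ((n : ℝ) - t - 1) /
    (((n : ℝ) - 2) * ((n : ℝ) - 3))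

/-- `B(t) = 4t(n-t)(t-1)(t-2)(n-1)/((n-2)(n-3))`. -/
noncomputable def B (n t : ℕ) : ℝ :=
  4 * (t : ℝ) * ((n : ℝ) - t) * ((t : ℝ) - 1) * ((t : ℝ) - 2) * ((n : ℝ) - 1) /
    (((n : ℝ) - 2) * ((n : ℝ) - 3))

/-- `U_diff^π = U1^π − U2^π`. -/
noncomputable def Udiff (n : ℕ) (R : Fin n → Fin n → ℝ) (π : Equiv.Perm (Fin n))
    (t1 t2 : ℕ) : ℝ :=
  U1 n R π t1 t2 - U2 n R π t1 t2

/-- `U_w^π = ((n−t2+t1−1)·U1^π + (t2−t1−1)·U2^π)/(n−2)`. -/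
noncomputable def Uw (n : ℕ) (R : Fin n → Fin n → ℝ) (π : Equiv.Perm (Fin n))
    (t1 t2 : ℕ) : ℝ :=
  (((n : ℝ) - t2 + t1 - 1) * U1 n R π t1 t2 + ((t2 : ℝ) - t1 - 1) * U2 n R π t1 t2) /
    ((n : ℝ) - 2)

/-- Standardized `Z_w^π(t1,t2)`. -/
noncomputable def Zw (n : ℕ) (R : Fin n → Fin n → ℝ) (π : Equiv.Perm (Fin n))
    (t1 t2 : ℕ) : ℝ :=
  (Uw n R π t1 t2 - pexp n (fun σ => Uw n R σ t1 t2)) /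
    Real.sqrt (pvar n (fun σ => Uw n R σ t1 t2))

/-- Standardized `Z_diff^π(t1,t2)`. -/
noncomputable def Zdiff (n : ℕ) (R : Fin n → Fin n → ℝ) (π : Equiv.Perm (Fin n))
    (t1 t2 : ℕ) : ℝ :=
  (Udiff n R π t1 t2 - pexp n (fun σ => Udiff n R σ t1 t2)) /
    Real.sqrt (pvar n (fun σ => Udiff n R σ t1 t2))

end RING

open RING

/-!
By symmetry of `R`, `U1 - U2 = 2 ∑_{t1 < i ≤ t2} R_{π(i)·} - ∑_{i,j} R_{ij}`, so `U_diff` is an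
affine function of the sum of `m = t2 - t1` row sums `R_{k·}` drawn without replacement. Such a
sum has variance `m (n - m)/(n - 1) · σ²`, where
`σ² = (1/n) ∑ R_{k·}² - ((1/n) ∑ R_{k·})² = (n - 1)² (r1² - r0²)`.
The second moment uses that `(π i, π j)` is uniform on the off-diagonal pairs when `i ≠ j`, since
the symmetric group is `2`-transitive.
-/

namespace Equiv.Perm

variable {α M : Type*} [Fintype α] [DecidableEq α] [AddCommMonoid M]

theorem sum_apply_eq_sum_apply (i j : α) (g : α → M) :
    ∑ π : Perm α, g (π i) = ∑ π : Perm α, g (π j) := by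
  rw [← Equiv.sum_comp (Equiv.mulRight (swap j i))]
  simp [Perm.mul_apply]

theorem card_smul_sum_apply (i : α) (g : α → M) :
    Fintype.card α • ∑ π : Perm α, g (π i) = (Fintype.card α).factorial • ∑ k, g k := by
  calc Fintype.card α • ∑ π : Perm α, g (π i)
      = ∑ j : α, ∑ π : Perm α, g (π j) := by
        simp [sum_apply_eq_sum_apply _ i g]
    _ = ∑ π : Perm α, ∑ k, g k := by
        rw [Finset.sum_comm]
        exact Finset.sum_congr rfl fun π _ => Equiv.sum_comp π g
    _ = (Fintype.card α).factorial • ∑ k, g k := by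
        simp [Fintype.card_perm]

theorem sum_apply_pair_eq_sum_apply_pair {i j k l : α} (hij : i ≠ j) (hkl : k ≠ l)
    (h : α → α → M) :
    ∑ π : Perm α, h (π i) (π j) = ∑ π : Perm α, h (π k) (π l) := by
  obtain ⟨τ, hτk, hτl⟩ :=
    MulAction.is_two_pretransitive_iff.mp (isMultiplyPretransitive α 2) hkl hij
  rw [← Equiv.sum_comp (Equiv.mulRight τ) fun π => h (π k) (π l)]
  simp_all [Perm.mul_apply, Perm.smul_def]

theorem card_offDiag_smul_sum_apply_pair {i j : α} (hij : i ≠ j) (h : α → α → M) :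
    #(univ : Finset α).offDiag • ∑ π : Perm α, h (π i) (π j)
      = (Fintype.card α).factorial • ∑ p ∈ (univ : Finset α).offDiag, h p.1 p.2 := by
  calc #(univ : Finset α).offDiag • ∑ π : Perm α, h (π i) (π j)
      = ∑ p ∈ (univ : Finset α).offDiag, ∑ π : Perm α, h (π p.1) (π p.2) := by
        rw [← Finset.sum_const]
        refine Finset.sum_congr rfl fun p hp => ?_
        exact sum_apply_pair_eq_sum_apply_pair hij (Finset.mem_offDiag.1 hp).2.2 h
    _ = ∑ π : Perm α, ∑ p ∈ (univ : Finset α).offDiag, h p.1 p.2 := by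
        rw [Finset.sum_comm]
        refine Finset.sum_congr rfl fun π _ => ?_
        refine Finset.sum_equiv (π.prodCongr π) (fun p => ?_) fun p _ => rfl
        simp [π.injective.ne_iff]
    _ = (Fintype.card α).factorial • ∑ p ∈ (univ : Finset α).offDiag, h p.1 p.2 := by
        simp [Fintype.card_perm]

end Equiv.Perm

theorem Finset.sum_offDiag_mul {ι R : Type*} [DecidableEq ι] [CommRing R] (s : Finset ι)
    (v : ι → R) :
    ∑ p ∈ s.offDiag, v p.1 * v p.2 = (∑ i ∈ s, v i) ^ 2 - ∑ i ∈ s, v i ^ 2 := by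
  rw [eq_sub_iff_add_eq, sq, sum_mul_sum, ← sum_product', ← diag_union_offDiag,
    sum_union (disjoint_diag_offDiag _), sum_diag]
  simp only [sq, add_comm]

theorem Finset.sum_sum_sub_sum_sum_compl {ι R : Type*} [Fintype ι] [DecidableEq ι] [CommRing R]
    (s : Finset ι) {M : ι → ι → R} (hM : ∀ i j, M i j = M j i) :
    ∑ i ∈ s, ∑ j ∈ s, M i j - ∑ i ∈ sᶜ, ∑ j ∈ sᶜ, M i j
      = 2 * ∑ i ∈ s, ∑ j, M i j - ∑ i, ∑ j, M i j := by
  have hcross : ∑ i ∈ sᶜ, ∑ j ∈ s, M i j = ∑ i ∈ s, ∑ j ∈ sᶜ, M i j := by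
    rw [sum_comm]
    simp only [hM]
  have hsplit : ∀ t : Finset ι,
      ∑ i ∈ t, ∑ j, M i j = ∑ i ∈ t, ∑ j ∈ s, M i j + ∑ i ∈ t, ∑ j ∈ sᶜ, M i j := fun t => by
    simp only [← sum_add_distrib, sum_add_sum_compl]
  rw [← sum_add_sum_compl s fun i => ∑ j, M i j, hsplit, hsplit, hcross]
  ring

namespace RING

section

variable {n : ℕ}

theorem pexp_sum {ι : Type*} (s : Finset ι) (f : ι → Equiv.Perm (Fin n) → ℝ) :
    pexp n (fun π => ∑ i ∈ s, f i π) = ∑ i ∈ s, pexp n (f i) := by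
  simp only [pexp, sum_comm (s := s), sum_div]

theorem pexp_mul_sub (f : Equiv.Perm (Fin n) → ℝ) (a b : ℝ) :
    pexp n (fun π => a * f π - b) = a * pexp n f - b := by
  have : (n.factorial : ℝ) ≠ 0 := by positivity
  simp only [pexp, sum_sub_distrib, ← mul_sum, sum_const, card_univ, Fintype.card_perm,
    Fintype.card_fin, nsmul_eq_mul]
  field_simp

theorem pvar_mul_sub (f : Equiv.Perm (Fin n) → ℝ) (a b : ℝ) :
    pvar n (fun π => a * f π - b) = a ^ 2 * pvar n f := by
  have hsq : ∀ π, (a * f π - b - (a * pexp n f - b)) ^ 2 = a ^ 2 * (f π - pexp n f) ^ 2 :=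
    fun π => by ring
  simp only [pvar, pexp_mul_sub, hsq]
  simpa using pexp_mul_sub (fun π => (f π - pexp n f) ^ 2) (a ^ 2) 0

theorem pvar_eq_pexp_sq_sub (f : Equiv.Perm (Fin n) → ℝ) :
    pvar n f = pexp n (fun π => f π ^ 2) - pexp n f ^ 2 := by
  have : (n.factorial : ℝ) ≠ 0 := by positivity
  simp only [pvar, pexp, sub_sq, sum_add_distrib, sum_sub_distrib, ← sum_mul, ← mul_sum,
    sum_const, card_univ, Fintype.card_perm, Fintype.card_fin, nsmul_eq_mul]
  field_simp
  ring

theorem pexp_apply (i : Fin n) (g : Fin n → ℝ) :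
    pexp n (fun π => g (π i)) = (∑ k, g k) / n := by
  have hn : (n : ℝ) ≠ 0 := by have := i.pos; positivity
  have := Equiv.Perm.card_smul_sum_apply i g
  simp only [Fintype.card_fin, nsmul_eq_mul] at this
  rw [pexp, div_eq_div_iff (by positivity) hn]
  linarith

theorem pexp_apply_mul_apply (i j : Fin n) (v : Fin n → ℝ) :
    pexp n (fun π => v (π i) * v (π j))
      = if i = j then (∑ k, v k ^ 2) / n
        else ((∑ k, v k) ^ 2 - ∑ k, v k ^ 2) / (n * (n - 1)) := by
  split_ifs with hij
  · subst hij
    simp only [← sq]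
    exact pexp_apply i fun k => v k ^ 2
  have hcard : ((#(univ : Finset (Fin n)).offDiag : ℕ) : ℝ) = n * (n - 1) := by
    rw [offDiag_card, card_univ, Fintype.card_fin, Nat.cast_sub (Nat.le_mul_self n)]
    push_cast
    ring
  have hn : (n : ℝ) * (n - 1) ≠ 0 := by
    rw [← hcard, Nat.cast_ne_zero, Finset.card_ne_zero]
    exact ⟨(i, j), by simp [hij]⟩
  have := Equiv.Perm.card_offDiag_smul_sum_apply_pair hij fun k l => v k * v l
  simp only [Fintype.card_fin, nsmul_eq_mul, hcard, sum_offDiag_mul] at this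
  rw [pexp, div_eq_div_iff (by positivity) hn]
  linarith

/-- Sampling `#S` values without replacement from the population `v`: the variance of their sum
is `#S` times the population variance, with the finite-population correction `(n - #S)/(n - 1)`. -/
theorem pvar_sum_apply (hn : 1 < n) (S : Finset (Fin n)) (v : Fin n → ℝ) :
    pvar n (fun π => ∑ i ∈ S, v (π i))
      = #S * (n - #S) / (n - 1) * ((∑ k, v k ^ 2) / n - ((∑ k, v k) / n) ^ 2) := by
  have hrow : ∀ i ∈ S, ∑ j ∈ S, pexp n (fun π => v (π i) * v (π j))
      = (∑ k, v k ^ 2) / n + (#S - 1) * (((∑ k, v k) ^ 2 - ∑ k, v k ^ 2) / (n * (n - 1))) := by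
    intro i hi
    simp only [pexp_apply_mul_apply, sum_ite, filter_eq, filter_ne, hi, if_true,
      sum_const, card_erase_of_mem hi, nsmul_eq_mul]
    rw [Nat.cast_sub (card_pos.2 ⟨i, hi⟩)]
    simp
  have hmean : pexp n (fun π => ∑ i ∈ S, v (π i)) = #S * ((∑ k, v k) / n) := by
    simp [pexp_sum, pexp_apply]
  have hsq : pexp n (fun π => (∑ i ∈ S, v (π i)) ^ 2)
      = #S * ((∑ k, v k ^ 2) / n
          + (#S - 1) * (((∑ k, v k) ^ 2 - ∑ k, v k ^ 2) / (n * (n - 1)))) := by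
    simp only [sq (∑ i ∈ S, _), sum_mul_sum, pexp_sum]
    rw [sum_congr rfl hrow, sum_const, nsmul_eq_mul]
  have hn0 : (n : ℝ) ≠ 0 := by positivity
  have hn1 : (n : ℝ) - 1 ≠ 0 := sub_ne_zero.2 (by exact_mod_cast hn.ne')
  rw [pvar_eq_pexp_sq_sub, hmean, hsq]
  field_simp
  ring

end

/-- The window `{t1+1, …, t2}` of the paper, in the 0-based indexing of `Fin n`. -/
def window (n t1 t2 : ℕ) : Finset (Fin n) :=
  univ.filter fun i => t1 ≤ (i : ℕ) ∧ (i : ℕ) < t2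

theorem card_window {n t1 t2 : ℕ} (h2n : t2 ≤ n) : #(window n t1 t2) = t2 - t1 := by
  have : window n t1 t2 = (Ico t1 t2).attachFin fun m hm => (mem_Ico.1 hm).2.trans_le h2n := by
    ext
    simp [window]
  rw [this, card_attachFin, Nat.card_Ico]

theorem U1_eq_sum_window (n : ℕ) (R : Fin n → Fin n → ℝ) (π : Equiv.Perm (Fin n)) (t1 t2 : ℕ) :
    U1 n R π t1 t2 = ∑ i ∈ window n t1 t2, ∑ j ∈ window n t1 t2, R (π i) (π j) := by
  simp only [U1, window, sum_filter, ite_sum_zero, ite_and]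

theorem U2_eq_sum_window_compl (n : ℕ) (R : Fin n → Fin n → ℝ) (π : Equiv.Perm (Fin n))
    (t1 t2 : ℕ) :
    U2 n R π t1 t2 = ∑ i ∈ (window n t1 t2)ᶜ, ∑ j ∈ (window n t1 t2)ᶜ, R (π i) (π j) := by
  simp only [U2, window, compl_filter, sum_filter, ite_sum_zero, ite_and, not_and_or, not_le,
    not_lt]

theorem Udiff_eq_two_mul_sum_window_sub {n : ℕ} {R : Fin n → Fin n → ℝ}
    (hsym : ∀ i j, R i j = R j i) (π : Equiv.Perm (Fin n)) (t1 t2 : ℕ) :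
    Udiff n R π t1 t2 = 2 * ∑ i ∈ window n t1 t2, ∑ l, R (π i) l - ∑ k, ∑ l, R k l := by
  rw [Udiff, U1_eq_sum_window, U2_eq_sum_window_compl,
    sum_sum_sub_sum_sum_compl _ fun i j => hsym (π i) (π j)]
  simp only [Equiv.sum_comp π, Equiv.sum_comp π fun k => ∑ l, R k l]

theorem r1sq_sub_r0_sq (n : ℕ) (R : Fin n → Fin n → ℝ) :
    r1sq n R - r0 n R ^ 2
      = ((∑ k, (∑ l, R k l) ^ 2) / n - ((∑ k, ∑ l, R k l) / n) ^ 2) / (n - 1) ^ 2 := by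
  simp only [r1sq, r0, Rbar, div_pow, ← sum_div]
  ring

end RING

theorem stmt6_general (n : ℕ) (hn : 4 ≤ n) (R : Fin n → Fin n → ℝ)
    (hsym : ∀ i j, R i j = R j i)
    (t1 t2 : ℕ) (h12 : t1 < t2) (h2n : t2 ≤ n) :
    pvar n (fun π => Udiff n R π t1 t2)
      = 4 * ((t2 : ℝ) - t1) * ((n : ℝ) - t2 + t1) * ((n : ℝ) - 1)
          * (r1sq n R - (r0 n R) ^ 2) := by
  have hn1 : (n : ℝ) - 1 ≠ 0 := sub_ne_zero.2 (by norm_cast; omega)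
  simp only [Udiff_eq_two_mul_sum_window_sub hsym, pvar_mul_sub]
  rw [pvar_sum_apply (by omega) _ fun k => ∑ l, R k l, card_window h2n, r1sq_sub_r0_sq,
    Nat.cast_sub h12.le]
  field_simp
  ring

/-- Under the permutation null distribution, for all integers `0 ≤ t1 < t2 ≤ n`,
`Var(U_diff^π(t1,t2)) = 4(t2 − t1)(n − t2 + t1)(n−1)·(r1² − r0²)`. -/
theorem stmt6 (n : ℕ) (hn : 4 ≤ n) (R : Fin n → Fin n → ℝ)
    (hsym : ∀ i j, R i j = R j i) (hdiag : ∀ i, R i i = 0)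
    (t1 t2 : ℕ) (h12 : t1 < t2) (h2n : t2 ≤ n) :
    pvar n (fun π => Udiff n R π t1 t2)
      = 4 * ((t2 : ℝ) - t1) * ((n : ℝ) - t2 + t1) * ((n : ℝ) - 1)
          * (r1sq n R - (r0 n R) ^ 2) :=
  stmt6_general n hn R hsym t1 t2 h12 h2n
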